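/- arXiv:1907.05924 — 3 statements merged into one kernel-verified Lean document; each statement's English description precedes it below -/
import Mathlib

section
/- Let d ≥ 2 and consider a tensor-train mode hierarchy on Ω = Ω₁ × ⋯ × Ω_d. The family of d-variate product functions T_I(x₁,…,x_d) = ψ^{(1)}_{i₁}(x₁) ψ^{(2)}_{i₁ i₂}(x₂) ⋯ ψ^{(d−1)}_{i₁⋯i_{d−1}}(x_{d−1}) ψ^{(d)}_{i₁⋯i_{d−1}}(x_d), indexed by multi-indices I = (i₁,…,i_{d−1}) ∈ ℕ^{d−1}, is orthonormal in L²(μ₁ ⊗ ⋯ ⊗ μ_d): ⟨T_I, T_J⟩ = 1 if I = J and 0 otherwise. -/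
/-!
The inner product of two product functions on `Ω₁ × ⋯ × Ω_d` factorises, by Fubini, into the
product of the inner products of their factors. For `I = J` every factor is `‖ψ^{(j)}_I‖² = 1`.
For `I ≠ J`, let `k` be the first position where they differ: the level-`k` modes of `I` and `J`
share the prefix `i₁ ⋯ i_{k-1}` and differ in the last index, so they are orthogonal and the
product vanishes.
-/

open MeasureTheory

theorem MeasureTheory.L2.inner_eq_prod_inner_of_ae_eq_prod {𝕜 ι : Type*} [RCLike 𝕜] [Fintype ι]
    {Ω : ι → Type*} [∀ i, MeasurableSpace (Ω i)] {μ : ∀ i, Measure (Ω i)}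
    [∀ i, SigmaFinite (μ i)] {f g : ∀ i, Lp 𝕜 2 (μ i)} {F G : Lp 𝕜 2 (Measure.pi μ)}
    (hF : F =ᵐ[Measure.pi μ] fun x => ∏ i, f i (x i))
    (hG : G =ᵐ[Measure.pi μ] fun x => ∏ i, g i (x i)) :
    inner 𝕜 F G = ∏ i, inner 𝕜 (f i) (g i) := by
  have hFG : (fun x => inner 𝕜 (F x) (G x)) =ᵐ[Measure.pi μ]
      fun x => ∏ i, inner 𝕜 (f i (x i)) (g i (x i)) := by
    filter_upwards [hF, hG] with x hFx hGx
    simp only [hFx, hGx, RCLike.inner_apply, map_prod, Finset.prod_mul_distrib]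
  simp only [L2.inner_def, integral_congr_ae hFG]
  exact integral_fintype_prod_eq_prod fun i y => inner 𝕜 (f i y) (g i y)

theorem exists_ne_forall_lt_eq {ι α : Type*} [LT ι] [WellFoundedLT ι] {I J : ι → α} (h : I ≠ J) :
    ∃ k, I k ≠ J k ∧ ∀ k' < k, I k' = J k' := by
  obtain ⟨k, hk, hmin⟩ := wellFounded_lt.has_min {k | I k ≠ J k} (Function.ne_iff.mp h)
  exact ⟨k, hk, fun k' hk' => not_not.mp fun h' => hmin k' h' hk'⟩

namespace TensorTrain

variable {𝕜 : Type*} [RCLike 𝕜] {d : ℕ} {E : Fin d → Type*} [∀ j, NormedAddCommGroup (E j)]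
  [∀ j, InnerProductSpace 𝕜 (E j)] {ψ : (j : Fin d) → (Fin (d - 1) → ℕ) → E j}

theorem norm_eq_one (hd : 0 < d)
    (hortho : ∀ (j : Fin d) (h : (j : ℕ) < d - 1) (I : Fin (d - 1) → ℕ),
      Orthonormal 𝕜 (fun n : ℕ => ψ j (Function.update I ⟨(j : ℕ), h⟩ n)))
    (hlast : ∀ I : Fin (d - 1) → ℕ, ‖ψ ⟨d - 1, by omega⟩ I‖ = 1) (j : Fin d) (I : Fin (d - 1) → ℕ) :
    ‖ψ j I‖ = 1 := by
  by_cases hj : (j : ℕ) < d - 1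
  · simpa using (hortho j hj I).1 (I ⟨j, hj⟩)
  · rw [show j = ⟨d - 1, by omega⟩ from Fin.ext (by simp; omega)]
    exact hlast I

theorem inner_eq_zero_of_ne
    (hdep : ∀ (j : Fin d) (I I' : Fin (d - 1) → ℕ),
      (∀ k : Fin (d - 1), (k : ℕ) ≤ min (j : ℕ) (d - 2) → I k = I' k) → ψ j I = ψ j I')
    (hortho : ∀ (j : Fin d) (h : (j : ℕ) < d - 1) (I : Fin (d - 1) → ℕ),
      Orthonormal 𝕜 (fun n : ℕ => ψ j (Function.update I ⟨(j : ℕ), h⟩ n)))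
    {I J : Fin (d - 1) → ℕ} (hIJ : I ≠ J) : ∃ j, inner 𝕜 (ψ j I) (ψ j J) = 0 := by
  obtain ⟨k, hk, hprefix⟩ := exists_ne_forall_lt_eq hIJ
  let j : Fin d := ⟨k, by omega⟩
  -- `ψ j` only sees the prefix of `J` up to `k`, which agrees with that of `update I k (J k)`
  have hJ : ψ j J = ψ j (Function.update I k (J k)) := by
    refine hdep j _ _ fun k' hk' => ?_
    have hk'k : k' ≤ k := Fin.le_iff_val_le_val.mpr (hk'.trans (min_le_left _ _))
    rcases hk'k.lt_or_eq with hlt | rfl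
    · rw [Function.update_of_ne hlt.ne, hprefix k' hlt]
    · rw [Function.update_self]
  have hdiff : inner 𝕜 (ψ j (Function.update I k (I k))) (ψ j (Function.update I k (J k))) = 0 :=
    (hortho j k.2 I).2 hk
  rw [Function.update_eq_self, ← hJ] at hdiff
  exact ⟨j, hdiff⟩

end TensorTrain

/-- Given a tensor-train mode hierarchy on `Ω = Ω₁ × ⋯ × Ω_d` (`d ≥ 2`),
levels indexed by `j : Fin d` and multi-indices `I : Fin (d-1) → ℕ` — where the level-`j`
mode depends only on the first `min (j+1) (d-1)` components of the multi-index (i.e. on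
components `k ≤ min j (d-2)` in 0-based indexing), each level `j < d-1` is orthonormal in
`L²(μ_j)` as the `j`-th index varies with its prefix fixed, and the last-level modes have
unit norm — the family of product functions
`T_I(x) = ψ^{(1)}_{i₁}(x₁) ⋯ ψ^{(d)}_{i₁⋯i_{d-1}}(x_d)` is orthonormal in
`L²(μ₁ ⊗ ⋯ ⊗ μ_d)`. -/
theorem tensorTrain_modes_orthonormal
    (d : ℕ) (hd : 2 ≤ d)
    (Ω : Fin d → Type*) [∀ j, MeasurableSpace (Ω j)]
    (μ : ∀ j, Measure (Ω j)) [∀ j, SigmaFinite (μ j)]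
    (ψ : (j : Fin d) → (Fin (d - 1) → ℕ) → Lp ℝ 2 (μ j))
    (hdep : ∀ (j : Fin d) (I I' : Fin (d - 1) → ℕ),
      (∀ k : Fin (d - 1), (k : ℕ) ≤ min (j : ℕ) (d - 2) → I k = I' k) → ψ j I = ψ j I')
    (hortho : ∀ (j : Fin d) (h : (j : ℕ) < d - 1) (I : Fin (d - 1) → ℕ),
      Orthonormal ℝ (fun n : ℕ => ψ j (Function.update I ⟨(j : ℕ), h⟩ n)))
    (hlast : ∀ I : Fin (d - 1) → ℕ, ‖ψ ⟨d - 1, by omega⟩ I‖ = 1)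
    (T : (Fin (d - 1) → ℕ) → Lp ℝ 2 (Measure.pi μ))
    (hT : ∀ I, ⇑(T I) =ᵐ[Measure.pi μ] fun x : (j : Fin d) → Ω j => ∏ j, (ψ j I) (x j)) :
    Orthonormal ℝ T := by
  rw [orthonormal_iff_ite]
  intro I J
  rw [L2.inner_eq_prod_inner_of_ae_eq_prod (hT I) (hT J)]
  split_ifs with hIJ
  · subst hIJ
    refine Finset.prod_eq_one fun j _ => ?_
    rw [real_inner_self_eq_norm_sq, TensorTrain.norm_eq_one (by omega) hortho hlast, one_pow]
  · obtain ⟨j, hj⟩ := TensorTrain.inner_eq_zero_of_ne hdep hortho hIJ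
    exact Finset.prod_eq_zero (Finset.mem_univ j) hj
end

section
/- Let ψ_i : ℝ → L²(μ) and Ψ_i : ℝ → L²(ν), i = 1,…,r, be differentiable curves such that for every t the family (ψ_i(t)) is orthonormal in L²(μ) and the dynamic orthogonality condition ⟨ψ_i′(t), ψ_k(t)⟩_{L²(μ)} = 0 holds for all i, k. Let u(t) ∈ L²(μ ⊗ ν) be u(t)(x,y) = Σ_{i=1}^r ψ_i(t)(x) Ψ_i(t)(y), so that u′(t)(x,y) = Σ_{i=1}^r (ψ_i′(t)(x) Ψ_i(t)(y) + ψ_i(t)(x) Ψ_i′(t)(y)). Then for every k and every t, the derivative Ψ_k′(t) equals, as an element of L²(ν), the partial pairing of u′(t) with ψ_k(t): Ψ_k′(t)(y) = ∫ u′(t)(x,y) ψ_k(t)(x) dμ(x) for ν-a.e. y. -/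
open MeasureTheory
open scoped RealInnerProductSpace

/-! Pairing `u′(t)(·, y) = Σ_i (ψ_i′ Ψ_i(y) + ψ_i Ψ_i′(y))` with `ψ_k` in `x` gives
`Σ_i (Ψ_i(y) ⟪ψ_i′, ψ_k⟫ + Ψ_i′(y) ⟪ψ_i, ψ_k⟫)`: the first terms vanish by dynamic
orthogonality and the second collapse to `Ψ_k′(y)` by orthonormality. The only analytic
point is that an a.e. identity on `μ ⊗ ν` holds, for `ν`-a.e. `y`, `μ`-a.e. in `x`. -/

namespace MeasureTheory

theorem Measure.ae_ae_swap_of_ae_prod {α β : Type*} [MeasurableSpace α] [MeasurableSpace β]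
    {μ : Measure α} {ν : Measure β} [SFinite μ] [SFinite ν] {p : α × β → Prop}
    (h : ∀ᵐ z ∂μ.prod ν, p z) : ∀ᵐ y ∂ν, ∀ᵐ x ∂μ, p (x, y) :=
  Measure.ae_ae_of_ae_prod (Measure.measurePreserving_swap.quasiMeasurePreserving.ae h)

namespace L2

variable {α : Type*} [MeasurableSpace α] {μ : Measure α}

theorem integrable_mul (f g : Lp ℝ 2 μ) : Integrable (fun x => f x * g x) μ := by
  simpa only [RCLike.inner_apply, conj_trivial, mul_comm] using L2.integrable_inner (𝕜 := ℝ) f g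

theorem integral_mul_eq_inner (f g : Lp ℝ 2 μ) : ∫ x, f x * g x ∂μ = ⟪f, g⟫ := by
  simp only [L2.inner_def, RCLike.inner_apply, conj_trivial, mul_comm]

theorem integral_sum_mul_add_mul_mul {ι : Type*} (s : Finset ι) (f g : ι → Lp ℝ 2 μ)
    (a b : ι → ℝ) (h : Lp ℝ 2 μ) :
    ∫ x, (∑ i ∈ s, (f i x * a i + g i x * b i)) * h x ∂μ
      = ∑ i ∈ s, (a i * ⟪f i, h⟫ + b i * ⟪g i, h⟫) := by
  have hterm : ∀ i, Integrable (fun x => a i * (f i x * h x) + b i * (g i x * h x)) μ :=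
    fun i => ((integrable_mul _ _).const_mul _).add ((integrable_mul _ _).const_mul _)
  calc ∫ x, (∑ i ∈ s, (f i x * a i + g i x * b i)) * h x ∂μ
      = ∫ x, ∑ i ∈ s, (a i * (f i x * h x) + b i * (g i x * h x)) ∂μ := by
        congr 1 with x
        rw [Finset.sum_mul]
        exact Finset.sum_congr rfl fun i _ => by ring
    _ = ∑ i ∈ s, (a i * ⟪f i, h⟫ + b i * ⟪g i, h⟫) := by
        rw [integral_finsetSum s fun i _ => hterm i]
        refine Finset.sum_congr rfl fun i _ => ?_
        rw [integral_add ((integrable_mul _ _).const_mul _) ((integrable_mul _ _).const_mul _),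
          integral_const_mul, integral_const_mul, integral_mul_eq_inner, integral_mul_eq_inner]

end L2

end MeasureTheory

theorem DO_propagator_Psi_evolution_general
    {Ω₁ Ω₂ : Type*} [MeasurableSpace Ω₁] [MeasurableSpace Ω₂]
    (μ : Measure Ω₁) (ν : Measure Ω₂) [SigmaFinite μ] [SigmaFinite ν]
    (r : ℕ)
    (ψ ψd : Fin r → ℝ → Lp ℝ 2 μ) (Ψ Ψd : Fin r → ℝ → Lp ℝ 2 ν)
    (hON : ∀ t, Orthonormal ℝ (fun i => ψ i t))
    (hDO : ∀ i k t, ⟪ψd i t, ψ k t⟫ = 0)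
    (ud : ℝ → Lp ℝ 2 (μ.prod ν))
    (hud : ∀ t, ⇑(ud t) =ᵐ[μ.prod ν] fun p : Ω₁ × Ω₂ =>
      ∑ i, ((ψd i t) p.1 * (Ψ i t) p.2 + (ψ i t) p.1 * (Ψd i t) p.2)) :
    ∀ (k : Fin r) (t : ℝ),
      ∀ᵐ y ∂ν, (Ψd k t) y = ∫ x, (ud t) (x, y) * (ψ k t) x ∂μ := by
  intro k t
  filter_upwards [Measure.ae_ae_swap_of_ae_prod (hud t)] with y hy
  rw [integral_congr_ae (hy.mono fun x hx => by rw [hx]), L2.integral_sum_mul_add_mul_mul]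
  simp [hDO, orthonormal_iff_ite.mp (hON t)]

/-- **DO propagator: evolution of the `Ψ_k` modes.** Let
`ψ_i : ℝ → L²(μ)` and `Ψ_i : ℝ → L²(ν)` be differentiable curves with `(ψ_i(t))`
orthonormal for every `t` and satisfying the dynamic orthogonality condition
`⟪ψ_i′(t), ψ_k(t)⟫ = 0`.  If `u(t)(x,y) = Σ_i ψ_i(t)(x) Ψ_i(t)(y)`, so that
`u′(t)(x,y) = Σ_i (ψ_i′(t)(x) Ψ_i(t)(y) + ψ_i(t)(x) Ψ_i′(t)(y))`, then for every `k`
and `t` the derivative `Ψ_k′(t)` equals the partial pairing of `u′(t)` with `ψ_k(t)`: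
`Ψ_k′(t)(y) = ∫ u′(t)(x,y) ψ_k(t)(x) dμ(x)` for `ν`-a.e. `y`. -/
theorem DO_propagator_Psi_evolution
    {Ω₁ Ω₂ : Type*} [MeasurableSpace Ω₁] [MeasurableSpace Ω₂]
    (μ : Measure Ω₁) (ν : Measure Ω₂) [SigmaFinite μ] [SigmaFinite ν]
    (r : ℕ)
    (ψ ψd : Fin r → ℝ → Lp ℝ 2 μ) (Ψ Ψd : Fin r → ℝ → Lp ℝ 2 ν)
    (hψ : ∀ i t, HasDerivAt (ψ i) (ψd i t) t)
    (hΨ : ∀ i t, HasDerivAt (Ψ i) (Ψd i t) t)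
    (hON : ∀ t, Orthonormal ℝ (fun i => ψ i t))
    (hDO : ∀ i k t, ⟪ψd i t, ψ k t⟫ = 0)
    (u ud : ℝ → Lp ℝ 2 (μ.prod ν))
    (hu : ∀ t, ⇑(u t) =ᵐ[μ.prod ν] fun p : Ω₁ × Ω₂ => ∑ i, (ψ i t) p.1 * (Ψ i t) p.2)
    (hud : ∀ t, ⇑(ud t) =ᵐ[μ.prod ν] fun p : Ω₁ × Ω₂ =>
      ∑ i, ((ψd i t) p.1 * (Ψ i t) p.2 + (ψ i t) p.1 * (Ψd i t) p.2))
    (hud_deriv : ∀ t, HasDerivAt u (ud t) t) :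
    ∀ (k : Fin r) (t : ℝ),
      ∀ᵐ y ∂ν, (Ψd k t) y = ∫ x, (ud t) (x, y) * (ψ k t) x ∂μ :=
  DO_propagator_Psi_evolution_general μ ν r ψ ψd Ψ Ψd hON hDO ud hud
end

section
/- Let ψ_i : ℝ → L²(μ) and Ψ_i : ℝ → L²(ν), i = 1,…,r, be differentiable curves such that for every t the family (ψ_i(t)) is orthonormal in L²(μ) and the dynamic orthogonality condition ⟨ψ_i′(t), ψ_k(t)⟩_{L²(μ)} = 0 holds for all i, k. Let u(t) ∈ L²(μ ⊗ ν) be u(t)(x,y) = Σ_{i=1}^r ψ_i(t)(x) Ψ_i(t)(y), so that u′(t)(x,y) = Σ_{i=1}^r (ψ_i′(t)(x) Ψ_i(t)(y) + ψ_i(t)(x) Ψ_i′(t)(y)). Then for every k and every t the following identity holds in L²(μ): Σ_{i=1}^r ⟨Ψ_i(t), Ψ_k(t)⟩_{L²(ν)} · ψ_i′(t) = (x ↦ ∫ u′(t)(x,y) Ψ_k(t)(y) dν(y)) − Σ_{i=1}^r ⟨u′(t), ψ_i(t) Ψ_k(t)⟩_{L²(μ⊗ν)} · ψ_i(t), where ψ_i(t)Ψ_k(t)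 denotes the product function (x,y) ↦ ψ_i(t)(x) Ψ_k(t)(y). -/
open MeasureTheory
open scoped RealInnerProductSpace

/-!
Write `u′(t) = Σ_j a_j ⊗ b_j` with `(a, b)` running over the `2r` pairs `(ψ_i′, Ψ_i)` and
`(ψ_i, Ψ_i′)`. For such a separable function, Fubini gives `⟪u′, ψ_i ⊗ Ψ_k⟫ = Σ_j ⟪a_j, ψ_i⟫⟪b_j, Ψ_k⟫`
and `∫ u′(·, y) Ψ_k(y) dν(y) = Σ_j ⟪b_j, Ψ_k⟫ a_j`. Orthonormality and the DO condition collapse the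
first sum to `⟪Ψ_i′, Ψ_k⟫`, which is exactly the coefficient of `ψ_i` in the second one.
-/

namespace MeasureTheory.L2

section
variable {α : Type*} [MeasurableSpace α] {μ : Measure α}

theorem real_inner_eq_integral_mul (f g : Lp ℝ 2 μ) : ⟪f, g⟫ = ∫ x, f x * g x ∂μ := by
  simp only [inner_def, RCLike.inner_apply, conj_trivial, mul_comm]

end

variable {α β ι : Type*} [MeasurableSpace α] [MeasurableSpace β] {μ : Measure α} {ν : Measure β}
  [SFinite ν] [Fintype ι] {a : ι → Lp ℝ 2 μ} {b : ι → Lp ℝ 2 ν} {F : Lp ℝ 2 (μ.prod ν)}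

theorem inner_eq_sum_inner_mul_inner_of_ae_eq_sum_mul [SFinite μ]
    (hF : ⇑F =ᵐ[μ.prod ν] fun p => ∑ j, a j p.1 * b j p.2)
    {E : Lp ℝ 2 (μ.prod ν)} {f : Lp ℝ 2 μ} {g : Lp ℝ 2 ν}
    (hE : ⇑E =ᵐ[μ.prod ν] fun p => f p.1 * g p.2) :
    ⟪F, E⟫ = ∑ j, ⟪a j, f⟫ * ⟪b j, g⟫ := by
  have hFE : (fun p => F p * E p) =ᵐ[μ.prod ν]
      fun p => ∑ j, (a j p.1 * f p.1) * (b j p.2 * g p.2) := by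
    filter_upwards [hF, hE] with p hFp hEp
    rw [hFp, hEp, Finset.sum_mul]
    exact Finset.sum_congr rfl fun j _ => by ring
  rw [real_inner_eq_integral_mul, integral_congr_ae hFE,
    integral_finsetSum _ fun j _ => (integrable_mul _ _).mul_prod (integrable_mul _ _)]
  refine Finset.sum_congr rfl fun j _ => ?_
  rw [real_inner_eq_integral_mul, real_inner_eq_integral_mul]
  exact integral_prod_mul (fun x => a j x * f x) (fun y => b j y * g y)

theorem eq_sum_inner_smul_of_ae_eq_integral_mul
    (hF : ⇑F =ᵐ[μ.prod ν] fun p => ∑ j, a j p.1 * b j p.2)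
    {g : Lp ℝ 2 ν} {h : Lp ℝ 2 μ} (hh : ⇑h =ᵐ[μ] fun x => ∫ y, F (x, y) * g y ∂ν) :
    h = ∑ j, ⟪b j, g⟫ • a j := by
  refine Lp.ext ?_
  filter_upwards [hh, Measure.ae_ae_of_ae_prod hF, Lp.coeFn_fun_finsetSum Finset.univ
    (fun j => ⟪b j, g⟫ • a j), ae_all_iff.mpr fun j => Lp.coeFn_smul ⟪b j, g⟫ (a j)]
    with x hhx hFx hsum hsmul
  have hslice : (fun y => F (x, y) * g y) =ᵐ[ν] fun y => ∑ j, a j x * (b j y * g y) := by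
    filter_upwards [hFx] with y hy
    rw [hy, Finset.sum_mul]
    exact Finset.sum_congr rfl fun j _ => by ring
  rw [hhx, hsum, integral_congr_ae hslice,
    integral_finsetSum _ fun j _ => (integrable_mul _ _).const_mul _]
  refine Finset.sum_congr rfl fun j _ => ?_
  rw [hsmul j, integral_const_mul, real_inner_eq_integral_mul, Pi.smul_apply, smul_eq_mul,
    mul_comm]

end MeasureTheory.L2

theorem DO_propagator_psi_evolution_general
    {Ω₁ Ω₂ : Type*} [MeasurableSpace Ω₁] [MeasurableSpace Ω₂]
    (μ : Measure Ω₁) (ν : Measure Ω₂) [SigmaFinite μ] [SigmaFinite ν]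
    (r : ℕ)
    (ψ ψd : Fin r → ℝ → Lp ℝ 2 μ) (Ψ Ψd : Fin r → ℝ → Lp ℝ 2 ν)
    (hON : ∀ t, Orthonormal ℝ (fun i => ψ i t))
    (hDO : ∀ i k t, ⟪ψd i t, ψ k t⟫ = 0)
    (ud : ℝ → Lp ℝ 2 (μ.prod ν))
    (hud : ∀ t, ⇑(ud t) =ᵐ[μ.prod ν] fun p : Ω₁ × Ω₂ =>
      ∑ i, ((ψd i t) p.1 * (Ψ i t) p.2 + (ψ i t) p.1 * (Ψd i t) p.2)) :
    ∀ (k : Fin r) (t : ℝ)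
      -- `g` is the partial pairing `x ↦ ∫ u′(t)(x,y) Ψ_k(t)(y) dν(y)` as an element of `L²(μ)`
      (g : Lp ℝ 2 μ), (⇑g =ᵐ[μ] fun x => ∫ y, (ud t) (x, y) * (Ψ k t) y ∂ν) →
      -- `E i` is the product function `(x,y) ↦ ψ_i(t)(x) Ψ_k(t)(y)` as an element of `L²(μ⊗ν)`
      ∀ E : Fin r → Lp ℝ 2 (μ.prod ν),
        (∀ i, ⇑(E i) =ᵐ[μ.prod ν] fun p : Ω₁ × Ω₂ => (ψ i t) p.1 * (Ψ k t) p.2) →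
      ∑ i, ⟪Ψ i t, Ψ k t⟫ • ψd i t = g - ∑ i, ⟪ud t, E i⟫ • ψ i t := by
  intro k t g hg E hE
  have hsep : ⇑(ud t) =ᵐ[μ.prod ν] fun p =>
      ∑ j, Sum.elim (ψd · t) (ψ · t) j p.1 * Sum.elim (Ψ · t) (Ψd · t) j p.2 := by
    filter_upwards [hud t] with p hp
    simp only [hp, Fintype.sum_sum_type, Sum.elim_inl, Sum.elim_inr, Finset.sum_add_distrib]
  have hcoef : ∀ i, ⟪ud t, E i⟫ = ⟪Ψd i t, Ψ k t⟫ := fun i => by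
    simp [L2.inner_eq_sum_inner_mul_inner_of_ae_eq_sum_mul hsep (hE i), Fintype.sum_sum_type, hDO,
      orthonormal_iff_ite.mp (hON t)]
  have hg_eq : g = ∑ i, ⟪Ψ i t, Ψ k t⟫ • ψd i t + ∑ i, ⟪Ψd i t, Ψ k t⟫ • ψ i t := by
    rw [L2.eq_sum_inner_smul_of_ae_eq_integral_mul hsep hg, Fintype.sum_sum_type]
    rfl
  simp only [hcoef, hg_eq, add_sub_cancel_right]

/-- **DO propagator: evolution of the orthonormal modes `ψ_i`.** Let
`ψ_i : ℝ → L²(μ)` and `Ψ_i : ℝ → L²(ν)` be differentiable curves with `(ψ_i(t))`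
orthonormal for every `t` and satisfying the dynamic orthogonality condition
`⟪ψ_i′(t), ψ_k(t)⟫ = 0`.  If `u(t)(x,y) = Σ_i ψ_i(t)(x) Ψ_i(t)(y)`, so that
`u′(t)(x,y) = Σ_i (ψ_i′(t)(x) Ψ_i(t)(y) + ψ_i(t)(x) Ψ_i′(t)(y))`, then for every `k` and
`t` the identity
`Σ_i ⟪Ψ_i(t), Ψ_k(t)⟫ ψ_i′(t)
  = (x ↦ ∫ u′(t)(x,y) Ψ_k(t)(y) dν(y)) − Σ_i ⟪u′(t), ψ_i(t)Ψ_k(t)⟫ ψ_i(t)`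
holds in `L²(μ)`, where `ψ_i(t)Ψ_k(t)` denotes the product function
`(x,y) ↦ ψ_i(t)(x) Ψ_k(t)(y)`. -/
theorem DO_propagator_psi_evolution
    {Ω₁ Ω₂ : Type*} [MeasurableSpace Ω₁] [MeasurableSpace Ω₂]
    (μ : Measure Ω₁) (ν : Measure Ω₂) [SigmaFinite μ] [SigmaFinite ν]
    (r : ℕ)
    (ψ ψd : Fin r → ℝ → Lp ℝ 2 μ) (Ψ Ψd : Fin r → ℝ → Lp ℝ 2 ν)
    (hψ : ∀ i t, HasDerivAt (ψ i) (ψd i t) t)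
    (hΨ : ∀ i t, HasDerivAt (Ψ i) (Ψd i t) t)
    (hON : ∀ t, Orthonormal ℝ (fun i => ψ i t))
    (hDO : ∀ i k t, ⟪ψd i t, ψ k t⟫ = 0)
    (u ud : ℝ → Lp ℝ 2 (μ.prod ν))
    (hu : ∀ t, ⇑(u t) =ᵐ[μ.prod ν] fun p : Ω₁ × Ω₂ => ∑ i, (ψ i t) p.1 * (Ψ i t) p.2)
    (hud : ∀ t, ⇑(ud t) =ᵐ[μ.prod ν] fun p : Ω₁ × Ω₂ =>
      ∑ i, ((ψd i t) p.1 * (Ψ i t) p.2 + (ψ i t) p.1 * (Ψd i t) p.2))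
    (hud_deriv : ∀ t, HasDerivAt u (ud t) t) :
    ∀ (k : Fin r) (t : ℝ)
      -- `g` is the partial pairing `x ↦ ∫ u′(t)(x,y) Ψ_k(t)(y) dν(y)` as an element of `L²(μ)`
      (g : Lp ℝ 2 μ), (⇑g =ᵐ[μ] fun x => ∫ y, (ud t) (x, y) * (Ψ k t) y ∂ν) →
      -- `E i` is the product function `(x,y) ↦ ψ_i(t)(x) Ψ_k(t)(y)` as an element of `L²(μ⊗ν)`
      ∀ E : Fin r → Lp ℝ 2 (μ.prod ν),
        (∀ i, ⇑(E i) =ᵐ[μ.prod ν] fun p : Ω₁ × Ω₂ => (ψ i t) p.1 * (Ψ k t) p.2) →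
      ∑ i, ⟪Ψ i t, Ψ k t⟫ • ψd i t = g - ∑ i, ⟪ud t, E i⟫ • ψ i t :=
  DO_propagator_psi_evolution_general μ ν r ψ ψd Ψ Ψd hON hDO ud hud
end
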